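/- Let n ≥ 1 be a natural number, p ∈ [0,1], and let X be a random variable with the binomial distribution Bin(n,p). Fix δ ∈ (0,1). Define the one-sided Clopper–Pearson lower confidence bound p_L^δ(k) = inf{R ∈ [0,1] : 1 − F_{n,R}(k−1) ≥ δ} for k ≥ 1, and p_L^δ(0) = 0. Then Pr(p ≥ p_L^δ(X)) ≥ 1 − δ. -/

import Mathlib

open scoped Classical BigOperators

/-- The probability mass function of the binomial distribution `Bin(n, p)` at `j`. -/
noncomputable def binomPMF (n : ℕ) (p : ℝ) (j : ℕ) : ℝ :=
  (n.choose j : ℝ) * p ^ j * (1 - p) ^ (n - j)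

/-- The cumulative distribution function of `Bin(n, p)` at `k`:
`F_{n,p}(k) = Σ_{j=0}^{min(k,n)} C(n,j) p^j (1-p)^{n-j}`. -/
noncomputable def binomCDF (n : ℕ) (p : ℝ) (k : ℕ) : ℝ :=
  ∑ j ∈ Finset.range (min k n + 1), binomPMF n p j

/-- One-sided Clopper–Pearson upper confidence bound at count `k` and level `δ`:
`sup {R ∈ [0,1] : F_{n,R}(k) ≥ δ}`. -/
noncomputable def cpUpper (n : ℕ) (δ : ℝ) (k : ℕ) : ℝ :=
  sSup {R : ℝ | R ∈ Set.Icc (0 : ℝ) 1 ∧ δ ≤ binomCDF n R k}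

/-- One-sided Clopper–Pearson lower confidence bound at count `k` and level `δ`:
`inf {R ∈ [0,1] : 1 - F_{n,R}(k-1) ≥ δ}` for `k ≥ 1`, and `0` for `k = 0`. -/
noncomputable def cpLower (n : ℕ) (δ : ℝ) : ℕ → ℝ
  | 0 => 0
  | k + 1 => sInf {R : ℝ | R ∈ Set.Icc (0 : ℝ) 1 ∧ δ ≤ 1 - binomCDF n R k}

/-! Let `m` be the first count with `p < p_L(m)` (if there is none, every count is covered).
All counts below `m` are covered, and `m = k + 1` because `p_L(0) = 0`. Since `p` is not in the
set whose infimum is `p_L(k + 1)`, `1 - F_{n,p}(k) < δ`, so the covered mass is at least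
`F_{n,p}(k) > 1 - δ`. No monotonicity of `p_L` in the count is needed. -/

open Finset

lemma binomPMF_nonneg (n : ℕ) {p : ℝ} (hp : p ∈ Set.Icc (0 : ℝ) 1) (j : ℕ) :
    0 ≤ binomPMF n p j :=
  mul_nonneg (mul_nonneg (Nat.cast_nonneg _) (pow_nonneg hp.1 _))
    (pow_nonneg (sub_nonneg.mpr hp.2) _)

lemma sum_range_binomPMF (n : ℕ) (p : ℝ) :
    ∑ j ∈ range (n + 1), binomPMF n p j = 1 := by
  have h := add_pow p (1 - p) n
  rw [add_sub_cancel, one_pow] at h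
  rw [h]
  exact sum_congr rfl fun j _ => by unfold binomPMF; ring

lemma binomCDF_eq_sum_range {n k : ℕ} (hk : k ≤ n) (p : ℝ) :
    binomCDF n p k = ∑ j ∈ range (k + 1), binomPMF n p j := by
  rw [binomCDF, min_eq_left hk]

lemma cpLower_succ_le {n k : ℕ} {p δ : ℝ} (hp : p ∈ Set.Icc (0 : ℝ) 1)
    (h : δ ≤ 1 - binomCDF n p k) : cpLower n δ (k + 1) ≤ p :=
  csInf_le ⟨0, fun _ hR => hR.1.1⟩ ⟨hp, h⟩

lemma one_sub_le_sum_ite_of_first_failure {n : ℕ} {w : ℕ → ℝ} {δ : ℝ} (hw : ∀ j, 0 ≤ w j)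
    (hsum : ∑ j ∈ range (n + 1), w j = 1) (hδ : 0 ≤ δ) {P : ℕ → Prop} [DecidablePred P]
    (h0 : P 0) (hfail : ∀ k < n, ¬ P (k + 1) → 1 - ∑ j ∈ range (k + 1), w j < δ) :
    1 - δ ≤ ∑ j ∈ range (n + 1), if P j then w j else 0 := by
  by_cases hall : ∀ j ≤ n, P j
  · rw [sum_congr rfl fun j hj => if_pos (hall j (Nat.lt_succ_iff.mp (mem_range.mp hj))), hsum]
    linarith
  have hex : ∃ m, m ≤ n ∧ ¬ P m := by push Not at hall; exact hall
  obtain ⟨hmn, hm⟩ := Nat.find_spec hex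
  obtain ⟨k, hk⟩ : ∃ k, Nat.find hex = k + 1 :=
    Nat.exists_eq_succ_of_ne_zero fun h => hm (h ▸ h0)
  have hcovered : ∀ j ≤ k, P j := fun j hj => by
    by_contra hPj
    exact Nat.find_min hex (show j < Nat.find hex by omega) ⟨by omega, hPj⟩
  refine le_of_lt ?_
  calc 1 - δ < ∑ j ∈ range (k + 1), w j := by linarith [hfail k (by omega) (hk ▸ hm)]
    _ = ∑ j ∈ range (k + 1), if P j then w j else 0 :=
        sum_congr rfl fun j hj => (if_pos (hcovered j (Nat.lt_succ_iff.mp (mem_range.mp hj)))).symm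
    _ ≤ ∑ j ∈ range (n + 1), if P j then w j else 0 :=
        sum_le_sum_of_subset_of_nonneg (range_subset_range.mpr (by omega))
          fun j _ _ => ite_nonneg (hw j) le_rfl

theorem clopperPearson_lower_coverage_general
    (n : ℕ) (p : ℝ) (hp : p ∈ Set.Icc (0 : ℝ) 1)
    (δ : ℝ) (hδ : δ ∈ Set.Ioo (0 : ℝ) 1) :
    1 - δ ≤ ∑ j ∈ Finset.range (n + 1),
      (if cpLower n δ j ≤ p then binomPMF n p j else 0) := by
  refine one_sub_le_sum_ite_of_first_failure (binomPMF_nonneg n hp) (sum_range_binomPMF n p)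
    hδ.1.le (P := fun j => cpLower n δ j ≤ p) hp.1 fun k hk hfail => ?_
  rw [← binomCDF_eq_sum_range hk.le]
  exact lt_of_not_ge fun h => hfail (cpLower_succ_le hp h)

/-- One-sided Clopper–Pearson lower bound coverage: Pr(p ≥ p_L^δ(X)) ≥ 1 - δ. -/
theorem clopperPearson_lower_coverage
    (n : ℕ) (hn : 1 ≤ n) (p : ℝ) (hp : p ∈ Set.Icc (0 : ℝ) 1)
    (δ : ℝ) (hδ : δ ∈ Set.Ioo (0 : ℝ) 1) :
    1 - δ ≤ ∑ j ∈ Finset.range (n + 1),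
      (if cpLower n δ j ≤ p then binomPMF n p j else 0) :=
  clopperPearson_lower_coverage_general n p hp δ hδ
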